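/- For the channel X1 = {2, 4}, X2 = Y = {0, 1, 2, 3}, Y = X2 mod X1, and every finite bounded delay set D, the capacity region of the ACC-MAC is strictly contained in the capacity region of the ACMAC: C_ACC-MAC = {(R1,R2) : R1 ≤ 1, R1 + R2 ≤ 2} ⊊ {(R1,R2) : R1 + R2 ≤ 2} = C_ACMAC (rates in bits, with R1, R2 ≥ 0); hence codeword side-information can be strictly weaker than message side-information. -/

import Mathlib

/-
The channel is deterministic, so a code with average error `ε` decodes at least a fraction
`1 - ε` of the message pairs correctly, and at delay `0` the correctly decoded pairs inject into
the output words (at most `4^n` of them); for the ACC-MAC the output is a function of the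
codeword `x1` and of `m2`, so they also inject into `X1^n × M2`. Hence `R1 + R2 ≤ 2` for both
channels and `R1 ≤ 1` for the ACC-MAC.

Conversely, zero-error codes exist. For the ACMAC user 1 always sends `4`, so `y = x2`, and
user 2 sends both messages in base `4`. For the ACC-MAC user 2 first sends symbols in `{2, 3}`:
their parity passes through either `x1`, and the output is `≥ 2` exactly when `x1 = 4`. So
user 2 sends one bit per symbol while user 1's frame stays readable: a prefix
`2^dmin 4^(dmin+dmax+1)` reveals the delay, then user 1's bits follow. After that, `x1 = 4`
and user 2 sends base-`4` digits. Both regions are star-shaped about `0`, so scaling a rate pair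
by `t < 1` and letting `t → 1` gives their closures.
-/

open scoped BigOperators
open Real

noncomputable section

namespace ACMACPaper

/-- A probability mass function on a finite type. -/
def IsPMF {α : Type*} [Fintype α] (p : α → ℝ) : Prop :=
  (∀ a, 0 ≤ p a) ∧ ∑ a, p a = 1

/-- Shannon entropy in bits of a pmf on a finite type. -/
def ent {α : Type*} [Fintype α] (p : α → ℝ) : ℝ :=
  -∑ a, p a * Real.logb 2 (p a)

/-- Mutual information `I(A;B)` of a joint pmf on `α × β` (bits). -/
def mutInfo {α β : Type*} [Fintype α] [Fintype β] (p : α × β → ℝ) : ℝ :=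
  ent (fun a => ∑ b, p (a, b)) + ent (fun b => ∑ a, p (a, b)) - ent p

/-- Conditional mutual information `I(A;B|C)` of a joint pmf on `α × β × γ` (bits),
`I(A;B|C) = H(A,C) + H(B,C) - H(A,B,C) - H(C)`. -/
def condMutInfo {α β γ : Type*} [Fintype α] [Fintype β] [Fintype γ]
    (p : α × β × γ → ℝ) : ℝ :=
  ent (fun ac : α × γ => ∑ b, p (ac.1, b, ac.2))
    + ent (fun bc : β × γ => ∑ a, p (a, bc.1, bc.2))
    - ent p - ent (fun c : γ => ∑ a, ∑ b, p (a, b, c))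

/-- Conditional entropy `H(A|B)` of a joint pmf on `α × β` (bits). -/
def condEnt {α β : Type*} [Fintype α] [Fintype β] (p : α × β → ℝ) : ℝ :=
  ent p - ent (fun b : β => ∑ a, p (a, b))

/-- Extension of a finite vector to integer indices; out-of-range symbols get a
fixed (arbitrary) default value. -/
def extVec {n : ℕ} {A : Type*} [Inhabited A] (x : Fin n → A) (j : ℤ) : A :=
  if h : 0 ≤ j ∧ j < (n : ℤ) then x ⟨j.toNat, by omega⟩ else default

/-- The finite set of possible delays `D = {-d_min, …, d_max}`. -/
def delaySet (dmin dmax : ℕ) : Finset ℤ := Finset.Icc (-(dmin : ℤ)) (dmax : ℤ)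

lemma delaySet_nonempty (dmin dmax : ℕ) : (delaySet dmin dmax).Nonempty :=
  ⟨0, by unfold delaySet; rw [Finset.mem_Icc]; omega⟩

variable {X1 X2 Y : Type*} [Fintype X1] [Fintype X2] [Fintype Y]
  [Inhabited X1] [Inhabited X2]

/-- The `n`-letter law of the asynchronous channel with delay `d`:
`P_d(y^n | x1^n, x2^n) = ∏ i, P(y_i | x_{1,i-d}, x_{2,i})`. -/
def blockLaw (W : X1 → X2 → Y → ℝ) (d : ℤ) {n : ℕ}
    (x1 : Fin n → X1) (x2 : Fin n → X2) (y : Fin n → Y) : ℝ :=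
  ∏ i : Fin n, W (extVec x1 (((i : ℕ) : ℤ) - d)) (x2 i) (y i)

/-- Average probability of error of a code, for delay `d`. -/
def avgErr (W : X1 → X2 → Y → ℝ) (d : ℤ) {n K1 K2 : ℕ}
    (f1 : Fin K1 → Fin n → X1) (f2 : Fin K1 → Fin K2 → Fin n → X2)
    (g : (Fin n → Y) → Fin K1 × Fin K2) : ℝ :=
  (1 / ((K1 : ℝ) * (K2 : ℝ))) * ∑ m1 : Fin K1, ∑ m2 : Fin K2, ∑ y : Fin n → Y,
    (if g y ≠ (m1, m2) then blockLaw W d (f1 m1) (f2 m1 m2) y else 0)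

/-- Achievability for the ACMAC (informed encoder knows the message of the
uninformed one): for every `ε > 0` there is a code whose average error
probability is at most `ε` simultaneously for every delay `d ∈ D`. -/
def ACMACAchievable (W : X1 → X2 → Y → ℝ) (dmin dmax : ℕ) (R : ℝ × ℝ) : Prop :=
  0 ≤ R.1 ∧ 0 ≤ R.2 ∧
  ∀ ε : ℝ, 0 < ε → ∃ (n K1 K2 : ℕ) (f1 : Fin K1 → Fin n → X1)
    (f2 : Fin K1 → Fin K2 → Fin n → X2) (g : (Fin n → Y) → Fin K1 × Fin K2),
      0 < n ∧ (2 : ℝ) ^ ((n : ℝ) * R.1) ≤ (K1 : ℝ) ∧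
      (2 : ℝ) ^ ((n : ℝ) * R.2) ≤ (K2 : ℝ) ∧
      ∀ d ∈ delaySet dmin dmax, avgErr W d f1 f2 g ≤ ε

/-- The capacity region of the ACMAC: the closure of the set of achievable
rate pairs. -/
def ACMACCapacity (W : X1 → X2 → Y → ℝ) (dmin dmax : ℕ) : Set (ℝ × ℝ) :=
  closure {R | ACMACAchievable W dmin dmax R}

end ACMACPaper

namespace ACMACPaper

variable {X1 X2 Y : Type*} [Fintype X1] [Fintype X2] [Fintype Y]
  [Inhabited X1] [Inhabited X2]

/-- Achievability for the ACC-MAC: the informed encoder knows the *codeword*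
of the uninformed user (its encoder is a map `X1^n × M2 → X2^n`), not its
message. -/
def ACCMACAchievable (W : X1 → X2 → Y → ℝ) (dmin dmax : ℕ) (R : ℝ × ℝ) : Prop :=
  0 ≤ R.1 ∧ 0 ≤ R.2 ∧
  ∀ ε : ℝ, 0 < ε → ∃ (n K1 K2 : ℕ) (f1 : Fin K1 → Fin n → X1)
    (f2 : (Fin n → X1) → Fin K2 → Fin n → X2) (g : (Fin n → Y) → Fin K1 × Fin K2),
      0 < n ∧ (2 : ℝ) ^ ((n : ℝ) * R.1) ≤ (K1 : ℝ) ∧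
      (2 : ℝ) ^ ((n : ℝ) * R.2) ≤ (K2 : ℝ) ∧
      ∀ d ∈ delaySet dmin dmax, avgErr W d f1 (fun m1 m2 => f2 (f1 m1) m2) g ≤ ε

/-- The capacity region of the ACC-MAC. -/
def ACCMACCapacity (W : X1 → X2 → Y → ℝ) (dmin dmax : ℕ) : Set (ℝ × ℝ) :=
  closure {R | ACCMACAchievable W dmin dmax R}

end ACMACPaper

namespace ACMACPaper

/-- The input alphabet `X1 = {2, 4}` of the example channel. -/
abbrev X1ex : Type := ↥({2, 4} : Finset ℕ)

instance : Inhabited X1ex := ⟨⟨2, by decide⟩⟩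

/-- The deterministic output `y = x2 mod x1` of the example channel
(`x1 ∈ {2,4}`, `x2, y ∈ {0,1,2,3}`). -/
def outEx (x1 : X1ex) (x2 : Fin 4) : Fin 4 :=
  ⟨(x2 : ℕ) % (x1 : ℕ), lt_of_le_of_lt (Nat.mod_le _ _) x2.isLt⟩

/-- The example channel `Y = X2 mod X1` as a transition pmf. -/
def Wex (x1 : X1ex) (x2 : Fin 4) (y : Fin 4) : ℝ :=
  if y = outEx x1 x2 then 1 else 0

end ACMACPaper

namespace ACMACPaper

open Finset Filter Topology

lemma exists_decoder_of_injective {ι M Z : Type*} [Nonempty M] (S : Set ι) (F : ι → M → Z)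
    (hF : ∀ i ∈ S, ∀ j ∈ S, ∀ m m', F i m = F j m' → m = m') :
    ∃ g : Z → M, ∀ i ∈ S, ∀ m, g (F i m) = m := by
  classical
  refine ⟨fun z => if hz : ∃ p : S × M, F p.1 p.2 = z then hz.choose.2
    else Classical.arbitrary M, fun i hi m => ?_⟩
  have hz : ∃ p : S × M, F p.1 p.2 = F i m := ⟨(⟨i, hi⟩, m), rfl⟩
  dsimp only
  rw [dif_pos hz]
  exact hF _ hz.choose.1.2 _ hi _ _ hz.choose_spec

lemma natCast_pos_of_two_rpow_le {x : ℝ} {K : ℕ} (h : (2 : ℝ) ^ x ≤ K) : 0 < K :=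
  Nat.cast_pos.mp ((Real.rpow_pos_of_pos two_pos x).trans_le h)

lemma two_rpow_le_natCast_two_pow {x : ℝ} {k : ℕ} (h : x ≤ k) :
    (2 : ℝ) ^ x ≤ ((2 ^ k : ℕ) : ℝ) := by
  rw [Nat.cast_pow, Nat.cast_ofNat, ← Real.rpow_natCast]
  exact Real.rpow_le_rpow_of_exponent_le one_le_two h

lemma le_of_forall_one_sub_mul_two_rpow_le {r c : ℝ}
    (h : ∀ ε : ℝ, 0 < ε → ε < 1 → ∃ n : ℕ, 0 < n ∧ (1 - ε) * 2 ^ (n * r) ≤ 2 ^ (n * c)) :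
    r ≤ c := by
  by_contra! hcr
  -- with `1 - ε = 2 ^ (-(r - c) / 2)` the hypothesis reads `n (r - c) ≤ (r - c) / 2`
  have hlt : (2 : ℝ) ^ (-(r - c) / 2) < 1 :=
    Real.rpow_lt_one_of_one_lt_of_neg one_lt_two (by linarith)
  obtain ⟨n, hn, hle⟩ := h (1 - 2 ^ (-(r - c) / 2)) (by linarith)
    (by linarith [Real.rpow_pos_of_pos two_pos (-(r - c) / 2)])
  rw [sub_sub_cancel, ← Real.rpow_add two_pos, Real.rpow_le_rpow_left_iff one_lt_two] at hle
  have : (1 : ℝ) ≤ n := by exact_mod_cast hn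
  nlinarith

lemma natCast_pow_eq_two_rpow {k : ℕ} (hk : 0 < k) (n : ℕ) :
    (k : ℝ) ^ n = 2 ^ (n * logb 2 k) := by
  rw [mul_comm, Real.rpow_mul_natCast zero_le_two,
    Real.rpow_logb two_pos (by norm_num) (by exact_mod_cast hk)]

lemma exists_nat_mul_le_of_add_lt_one {x y : ℝ} (hx : 0 ≤ x) (hy : 0 ≤ y) (hxy : x + y < 1)
    (C : ℕ) : ∃ n k l : ℕ, 0 < n ∧ n * x ≤ k ∧ n * y ≤ l ∧ k + l + C ≤ n := by
  have hgap : 0 < 1 - (x + y) := by linarith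
  obtain ⟨n, hn⟩ := exists_nat_gt ((C + 2) / (1 - (x + y)))
  have hn' := (div_lt_iff₀ hgap).mp hn
  refine ⟨n, ⌈n * x⌉₊, ⌈n * y⌉₊, ?_, Nat.le_ceil _, Nat.le_ceil _, ?_⟩
  · exact_mod_cast (div_pos (by positivity) hgap).trans hn
  · have hk := Nat.ceil_lt_add_one (by positivity : 0 ≤ n * x)
    have hl := Nat.ceil_lt_add_one (by positivity : 0 ≤ n * y)
    have : ((⌈n * x⌉₊ + ⌈n * y⌉₊ + C : ℕ) : ℝ) < n := by push_cast; nlinarith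
    exact_mod_cast this.le

lemma closure_eq_of_smul_mem {E : Type*} [TopologicalSpace E] [MulAction ℝ E]
    [ContinuousSMul ℝ E] {A S : Set E} (hS : IsClosed S) (hAS : A ⊆ S)
    (hSA : ∀ x ∈ S, ∀ t ∈ Set.Ioo (0 : ℝ) 1, t • x ∈ A) : closure A = S := by
  refine (closure_minimal hAS hS).antisymm fun x hx => ?_
  have hlim : Tendsto (fun t : ℝ => t • x) (𝓝[<] 1) (𝓝 x) := by
    have hcont : Continuous fun t : ℝ => t • x := continuous_id.smul continuous_const
    simpa using (hcont.tendsto 1).mono_left nhdsWithin_le_nhds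
  exact mem_closure_of_tendsto hlim (eventually_of_mem (Ioo_mem_nhdsLT one_pos) (hSA x hx))

lemma eq_of_div_pow_mod_eq {b k v w : ℕ} (hv : v < b ^ k) (hw : w < b ^ k)
    (h : ∀ j < k, v / b ^ j % b = w / b ^ j % b) : v = w :=
  congrArg Fin.val <| finFunctionFinEquiv.symm.injective (a₁ := ⟨v, hv⟩) (a₂ := ⟨w, hw⟩) <|
    funext fun j => Fin.ext <| by simp only [finFunctionFinEquiv_symm_apply_val, h j j.2]

lemma extVec_of_nonneg_of_lt {n : ℕ} {A : Type*} [Inhabited A] (x : Fin n → A) {j : ℤ}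
    (h0 : 0 ≤ j) (hn : j < n) : extVec x j = x ⟨j.toNat, by omega⟩ :=
  dif_pos ⟨h0, hn⟩

lemma extVec_restrict {n : ℕ} {A : Type*} [Inhabited A] (P : ℤ → A)
    (hP : ∀ j < 0, P j = default) {j : ℤ} (hj : j < n) :
    extVec (fun i : Fin n => P i) j = P j := by
  by_cases h0 : 0 ≤ j
  · rw [extVec_of_nonneg_of_lt _ h0 hj, Int.toNat_of_nonneg h0]
  · exact dif_neg (fun h => h0 h.1) |>.trans (hP j (by omega)).symm

lemma zero_mem_delaySet (dmin dmax : ℕ) : (0 : ℤ) ∈ delaySet dmin dmax := by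
  simp [delaySet]

theorem ACCMACAchievable.acmacAchievable {X1 X2 Y : Type*} [Inhabited X1] [Fintype Y]
    {W : X1 → X2 → Y → ℝ} {dmin dmax : ℕ} {R : ℝ × ℝ}
    (h : ACCMACAchievable W dmin dmax R) : ACMACAchievable W dmin dmax R := by
  refine ⟨h.1, h.2.1, fun ε hε => ?_⟩
  obtain ⟨n, K1, K2, f1, f2, g, hcode⟩ := h.2.2 ε hε
  exact ⟨n, K1, K2, f1, _, g, hcode⟩

/-! ### Deterministic channels -/

section Deterministic

variable {X1 X2 Y : Type*}

def detChannel [DecidableEq Y] (φ : X1 → X2 → Y) (x1 : X1) (x2 : X2) (y : Y) : ℝ :=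
  if y = φ x1 x2 then 1 else 0

def detOut [Inhabited X1] (φ : X1 → X2 → Y) (d : ℤ) {n : ℕ} (x1 : Fin n → X1)
    (x2 : Fin n → X2) : Fin n → Y :=
  fun i => φ (extVec x1 (((i : ℕ) : ℤ) - d)) (x2 i)

variable [Inhabited X1] [DecidableEq Y] (φ : X1 → X2 → Y) (d : ℤ) {n K1 K2 : ℕ}

lemma blockLaw_detChannel (x1 : Fin n → X1) (x2 : Fin n → X2) (y : Fin n → Y) :
    blockLaw (detChannel φ) d x1 x2 y = if y = detOut φ d x1 x2 then 1 else 0 := by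
  simp only [blockLaw, detChannel, prod_boole, mem_univ, true_implies, funext_iff]
  rfl

variable [Fintype Y] (f1 : Fin K1 → Fin n → X1) (f2 : Fin K1 → Fin K2 → Fin n → X2)
  (g : (Fin n → Y) → Fin K1 × Fin K2)

lemma avgErr_detChannel :
    avgErr (detChannel φ) d f1 f2 g =
      #{m : Fin K1 × Fin K2 | g (detOut φ d (f1 m.1) (f2 m.1 m.2)) ≠ m} / (K1 * K2) := by
  have hy (m : Fin K1 × Fin K2) : ∑ y, (if g y ≠ m then
      (if y = detOut φ d (f1 m.1) (f2 m.1 m.2) then (1 : ℝ) else 0) else 0)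
      = if g (detOut φ d (f1 m.1) (f2 m.1 m.2)) ≠ m then 1 else 0 := by
    rw [← Fintype.sum_ite_eq' (detOut φ d (f1 m.1) (f2 m.1 m.2))
      fun y => if g y ≠ m then (1 : ℝ) else 0]
    exact sum_congr rfl fun y _ => by split_ifs <;> simp_all
  simp only [avgErr, blockLaw_detChannel]
  rw [← Fintype.sum_prod_type' (f := fun m1 m2 => ∑ y, _)]
  simp only [hy, sum_boole, one_div_mul_eq_div]

lemma avgErr_detChannel_eq_zero
    (hg : ∀ m : Fin K1 × Fin K2, g (detOut φ d (f1 m.1) (f2 m.1 m.2)) = m) :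
    avgErr (detChannel φ) d f1 f2 g = 0 := by
  simp [avgErr_detChannel, hg]

variable {φ d f1 f2 g} {ε : ℝ}

lemma one_sub_mul_le_card_decoded (hε : avgErr (detChannel φ) d f1 f2 g ≤ ε) :
    (1 - ε) * (K1 * K2) ≤ #{m : Fin K1 × Fin K2 | g (detOut φ d (f1 m.1) (f2 m.1 m.2)) = m} := by
  have hsplit : (#{m : Fin K1 × Fin K2 | g (detOut φ d (f1 m.1) (f2 m.1 m.2)) = m} : ℝ)
      + #{m : Fin K1 × Fin K2 | g (detOut φ d (f1 m.1) (f2 m.1 m.2)) ≠ m} = K1 * K2 := by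
    rw [← Nat.cast_add, card_filter_add_card_filter_not, card_univ, Fintype.card_prod,
      Fintype.card_fin, Fintype.card_fin, Nat.cast_mul]
  rcases Nat.eq_zero_or_pos (K1 * K2) with h0 | hpos
  · rw [← Nat.cast_mul, h0, Nat.cast_zero, mul_zero]
    positivity
  · rw [avgErr_detChannel, div_le_iff₀ (by exact_mod_cast hpos)] at hε
    linarith

lemma one_sub_mul_le_card_pow (hε : avgErr (detChannel φ) d f1 f2 g ≤ ε) :
    (1 - ε) * (K1 * K2) ≤ (Fintype.card Y : ℝ) ^ n := by
  have hsub : ({m | g (detOut φ d (f1 m.1) (f2 m.1 m.2)) = m} : Finset (Fin K1 × Fin K2))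
      ⊆ univ.image g :=
    fun m hm => mem_image.mpr ⟨_, mem_univ _, by simpa using hm⟩
  calc (1 - ε) * (K1 * K2) ≤ _ := one_sub_mul_le_card_decoded hε
    _ ≤ (#(univ : Finset (Fin n → Y)) : ℝ) := by
      exact_mod_cast (card_le_card hsub).trans card_image_le
    _ = (Fintype.card Y : ℝ) ^ n := by simp

lemma one_sub_mul_le_card_pow_mul [Fintype X1] {F2 : (Fin n → X1) → Fin K2 → Fin n → X2}
    (hε : avgErr (detChannel φ) d f1 (fun m1 m2 => F2 (f1 m1) m2) g ≤ ε) :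
    (1 - ε) * (K1 * K2) ≤ (Fintype.card X1 : ℝ) ^ n * K2 := by
  have hsub : ({m | g (detOut φ d (f1 m.1) (F2 (f1 m.1) m.2)) = m} : Finset (Fin K1 × Fin K2))
      ⊆ univ.image fun p : (Fin n → X1) × Fin K2 => g (detOut φ d p.1 (F2 p.1 p.2)) :=
    fun m hm => mem_image.mpr ⟨(f1 m.1, m.2), mem_univ _, by simpa using hm⟩
  calc (1 - ε) * (K1 * K2) ≤ _ := one_sub_mul_le_card_decoded hε
    _ ≤ (#(univ : Finset ((Fin n → X1) × Fin K2)) : ℝ) := by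
      exact_mod_cast (card_le_card hsub).trans card_image_le
    _ = (Fintype.card X1 : ℝ) ^ n * K2 := by simp

lemma exists_avgErr_detChannel_eq_zero (hK1 : 0 < K1) (hK2 : 0 < K2) (D : Finset ℤ)
    (hinj : ∀ d ∈ D, ∀ d' ∈ D, ∀ m m' : Fin K1 × Fin K2,
      detOut φ d (f1 m.1) (f2 m.1 m.2) = detOut φ d' (f1 m'.1) (f2 m'.1 m'.2) → m = m') :
    ∃ g, ∀ d ∈ D, avgErr (detChannel φ) d f1 f2 g = 0 := by
  have : Nonempty (Fin K1 × Fin K2) := ⟨(⟨0, hK1⟩, ⟨0, hK2⟩)⟩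
  obtain ⟨g, hg⟩ := exists_decoder_of_injective (D : Set ℤ)
    (fun d (m : Fin K1 × Fin K2) => detOut φ d (f1 m.1) (f2 m.1 m.2)) hinj
  exact ⟨g, fun d hd => avgErr_detChannel_eq_zero φ d f1 f2 g (hg d hd)⟩

end Deterministic

section Achievability

variable {X1 X2 Y : Type*} [Inhabited X1] [DecidableEq Y] [Fintype Y] {φ : X1 → X2 → Y}
  {dmin dmax : ℕ} {R : ℝ × ℝ}

theorem ACMACAchievable.add_le_logb_card [Nonempty Y]
    (h : ACMACAchievable (detChannel φ) dmin dmax R) :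
    R.1 + R.2 ≤ logb 2 (Fintype.card Y) := by
  refine le_of_forall_one_sub_mul_two_rpow_le fun ε hε hε1 => ?_
  obtain ⟨n, K1, K2, f1, f2, g, hn, hK1, hK2, herr⟩ := h.2.2 ε hε
  refine ⟨n, hn, ?_⟩
  calc (1 - ε) * (2 : ℝ) ^ (n * (R.1 + R.2))
      = (1 - ε) * (2 ^ (n * R.1) * 2 ^ (n * R.2)) := by rw [mul_add, Real.rpow_add two_pos]
    _ ≤ (1 - ε) * (K1 * K2) := by gcongr
    _ ≤ (Fintype.card Y : ℝ) ^ n := one_sub_mul_le_card_pow (herr 0 (zero_mem_delaySet _ _))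
    _ = 2 ^ (n * logb 2 (Fintype.card Y)) := natCast_pow_eq_two_rpow Fintype.card_pos n

theorem ACCMACAchievable.fst_le_logb_card [Fintype X1]
    (h : ACCMACAchievable (detChannel φ) dmin dmax R) :
    R.1 ≤ logb 2 (Fintype.card X1) := by
  refine le_of_forall_one_sub_mul_two_rpow_le fun ε hε hε1 => ?_
  obtain ⟨n, K1, K2, f1, f2, g, hn, hK1, hK2, herr⟩ := h.2.2 ε hε
  refine ⟨n, hn, ?_⟩
  have hK2pos : (0 : ℝ) < K2 := by exact_mod_cast natCast_pos_of_two_rpow_le hK2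
  have hbound := one_sub_mul_le_card_pow_mul (herr 0 (zero_mem_delaySet _ _))
  calc (1 - ε) * (2 : ℝ) ^ (n * R.1) ≤ (1 - ε) * K1 := by gcongr
    _ ≤ (Fintype.card X1 : ℝ) ^ n := le_of_mul_le_mul_right (by linarith) hK2pos
    _ = 2 ^ (n * logb 2 (Fintype.card X1)) := natCast_pow_eq_two_rpow Fintype.card_pos n

variable {n K1 K2 : ℕ}

theorem ACMACAchievable.of_injective (h1 : 0 ≤ R.1) (h2 : 0 ≤ R.2) (hn : 0 < n)
    (hK1 : (2 : ℝ) ^ (n * R.1) ≤ K1) (hK2 : (2 : ℝ) ^ (n * R.2) ≤ K2)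
    (f1 : Fin K1 → Fin n → X1) (f2 : Fin K1 → Fin K2 → Fin n → X2)
    (hinj : ∀ d ∈ delaySet dmin dmax, ∀ d' ∈ delaySet dmin dmax, ∀ m m' : Fin K1 × Fin K2,
      detOut φ d (f1 m.1) (f2 m.1 m.2) = detOut φ d' (f1 m'.1) (f2 m'.1 m'.2) → m = m') :
    ACMACAchievable (detChannel φ) dmin dmax R := by
  obtain ⟨g, hg⟩ := exists_avgErr_detChannel_eq_zero (natCast_pos_of_two_rpow_le hK1)
    (natCast_pos_of_two_rpow_le hK2) _ hinj
  exact ⟨h1, h2, fun ε hε => ⟨n, K1, K2, f1, f2, g, hn, hK1, hK2,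
    fun d hd => (hg d hd).trans_le hε.le⟩⟩

theorem ACCMACAchievable.of_injective (h1 : 0 ≤ R.1) (h2 : 0 ≤ R.2) (hn : 0 < n)
    (hK1 : (2 : ℝ) ^ (n * R.1) ≤ K1) (hK2 : (2 : ℝ) ^ (n * R.2) ≤ K2)
    (f1 : Fin K1 → Fin n → X1) (f2 : (Fin n → X1) → Fin K2 → Fin n → X2)
    (hinj : ∀ d ∈ delaySet dmin dmax, ∀ d' ∈ delaySet dmin dmax, ∀ m m' : Fin K1 × Fin K2,
      detOut φ d (f1 m.1) (f2 (f1 m.1) m.2) = detOut φ d' (f1 m'.1) (f2 (f1 m'.1) m'.2) →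
        m = m') :
    ACCMACAchievable (detChannel φ) dmin dmax R := by
  obtain ⟨g, hg⟩ := exists_avgErr_detChannel_eq_zero (f2 := fun m1 m2 => f2 (f1 m1) m2)
    (natCast_pos_of_two_rpow_le hK1) (natCast_pos_of_two_rpow_le hK2) _ hinj
  exact ⟨h1, h2, fun ε hε => ⟨n, K1, K2, f1, f2, g, hn, hK1, hK2,
    fun d hd => (hg d hd).trans_le hε.le⟩⟩

end Achievability

/-! ### The channel `y = x2 mod x1` -/

def X1ex.two : X1ex := ⟨2, by decide⟩

def X1ex.four : X1ex := ⟨4, by decide⟩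

lemma Wex_eq_detChannel : Wex = detChannel outEx := rfl

lemma outEx_four (x2 : Fin 4) : outEx X1ex.four x2 = x2 :=
  Fin.ext (Nat.mod_eq_of_lt x2.isLt)

lemma outEx_val_mod_two (x1 : X1ex) (x2 : Fin 4) : (outEx x1 x2 : ℕ) % 2 = x2 % 2 := by
  obtain ⟨v, hv⟩ := x1
  simp only [Finset.mem_insert, Finset.mem_singleton] at hv
  rcases hv with rfl | rfl <;> simp only [outEx] <;> omega

lemma two_le_outEx_iff {x1 : X1ex} {x2 : Fin 4} (hx2 : 2 ≤ (x2 : ℕ)) :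
    2 ≤ (outEx x1 x2 : ℕ) ↔ x1 = X1ex.four := by
  obtain ⟨v, hv⟩ := x1
  simp only [Finset.mem_insert, Finset.mem_singleton] at hv
  rcases hv with rfl | rfl <;> simp [outEx, X1ex.four] <;> omega

theorem ACMACAchievable.add_le_two_of_Wex {dmin dmax : ℕ} {R : ℝ × ℝ}
    (h : ACMACAchievable Wex dmin dmax R) : R.1 + R.2 ≤ 2 := by
  rw [Wex_eq_detChannel] at h
  have hlog : logb 2 (4 : ℝ) = 2 := by
    rw [show (4 : ℝ) = 2 ^ (2 : ℝ) by norm_num, Real.logb_rpow two_pos (by norm_num)]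
  simpa [hlog] using h.add_le_logb_card

theorem ACCMACAchievable.fst_le_one_of_Wex {dmin dmax : ℕ} {R : ℝ × ℝ}
    (h : ACCMACAchievable Wex dmin dmax R) : R.1 ≤ 1 := by
  rw [Wex_eq_detChannel] at h
  simpa [show Fintype.card X1ex = 2 from rfl, Real.logb_self_eq_one one_lt_two] using
    h.fst_le_logb_card

-- Truncated subtraction: positions `i < s` repeat digit `0`; they are never read.
def quaternaryX2 (s w i : ℕ) : Fin 4 :=
  ⟨w / 4 ^ (i - s) % 4, Nat.mod_lt _ (by norm_num)⟩

lemma detOut_four_quaternaryX2 {a b n : ℕ} {d : ℤ} (hd : d ∈ delaySet a b) (w : ℕ) {j : ℕ}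
    (hj : b + j + a < n) :
    ((detOut outEx d (fun _ : Fin n => X1ex.four) (fun i => quaternaryX2 b w i)
      ⟨b + j, by omega⟩ : Fin 4) : ℕ) = w / 4 ^ j % 4 := by
  rw [delaySet, mem_Icc] at hd
  simp only [detOut]
  rw [extVec_of_nonneg_of_lt _ (by omega) (by omega), outEx_four]
  simp [quaternaryX2]

lemma eq_of_detOut_quaternaryX2_eq {a b k1 k2 n : ℕ} (hn : k1 + k2 + a + b ≤ n) {d d' : ℤ}
    (hd : d ∈ delaySet a b) (hd' : d' ∈ delaySet a b) {m m' : Fin (4 ^ k1) × Fin (4 ^ k2)}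
    (h : detOut outEx d (fun _ : Fin n => X1ex.four) (fun i => quaternaryX2 b (finProdFinEquiv m) i)
      = detOut outEx d' (fun _ => X1ex.four) (fun i => quaternaryX2 b (finProdFinEquiv m') i)) :
    m = m' := by
  have hlt (m : Fin (4 ^ k1) × Fin (4 ^ k2)) : (finProdFinEquiv m : ℕ) < 4 ^ (k1 + k2) :=
    (finProdFinEquiv m).isLt.trans_eq (pow_add 4 k1 k2).symm
  refine finProdFinEquiv.injective (Fin.ext (eq_of_div_pow_mod_eq (hlt m) (hlt m') fun j hj => ?_))
  have hj : b + j + a < n := by omega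
  rw [← detOut_four_quaternaryX2 hd _ hj, ← detOut_four_quaternaryX2 hd' _ hj, h]

theorem acmacAchievable_Wex {dmin dmax : ℕ} {R : ℝ × ℝ} (h1 : 0 ≤ R.1) (h2 : 0 ≤ R.2)
    (hs : R.1 + R.2 < 2) : ACMACAchievable Wex dmin dmax R := by
  obtain ⟨n, k1, k2, hn, hk1, hk2, hlen⟩ := exists_nat_mul_le_of_add_lt_one
    (x := R.1 / 2) (y := R.2 / 2) (by positivity) (by positivity) (by linarith) (dmin + dmax)
  have hrate {x : ℝ} {k : ℕ} (h : n * (x / 2) ≤ k) : (2 : ℝ) ^ (n * x) ≤ ((4 ^ k : ℕ) : ℝ) :=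
    (two_rpow_le_natCast_two_pow (k := 2 * k) (by push_cast; linarith)).trans_eq
      (by rw [pow_mul]; norm_num)
  rw [Wex_eq_detChannel]
  exact ACMACAchievable.of_injective h1 h2 hn (hrate hk1) (hrate hk2) (fun _ _ => X1ex.four)
    (fun m1 m2 i => quaternaryX2 dmax (finProdFinEquiv (m1, m2)) i)
    fun d hd d' hd' m m' h => eq_of_detOut_quaternaryX2_eq (by omega) hd hd' h

section SyncCode

/-- The frame `2^a 4^(a+b+1)`, then the bits of `v` with `1 ↦ 2` and `0 ↦ 4`, so that all later
symbols are `4`; negative positions read `2`, like `extVec`'s default. Among the first `a + b + 1`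
outputs exactly the first `a + d` are below `2`, which reveals the delay `d`. -/
def syncX1 (a b v : ℕ) (j : ℤ) : X1ex :=
  if j < a ∨ (2 * a + b + 1 ≤ j ∧ v.testBit (j - (2 * a + b + 1)).toNat) then X1ex.two
  else X1ex.four

def parityX2 (E w i : ℕ) : Fin 4 :=
  if i < E then ⟨2 + (w.testBit i).toNat, by have := Bool.toNat_le (w.testBit i); omega⟩
  else quaternaryX2 E (w / 2 ^ E) i

def syncOut (a b E : ℕ) (d : ℤ) (n v w : ℕ) : Fin n → Fin 4 :=
  detOut outEx d (fun i : Fin n => syncX1 a b v i) (fun i => parityX2 E w i)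

lemma syncX1_eq_four_iff {a b v : ℕ} {j : ℤ} :
    syncX1 a b v j = X1ex.four ↔
      a ≤ j ∧ (2 * a + b + 1 ≤ j → v.testBit (j - (2 * a + b + 1)).toNat = false) := by
  unfold syncX1
  split_ifs with h
  · refine iff_of_false (by decide) fun ⟨ha, hbit⟩ => ?_
    rcases h with h | ⟨hj, hb⟩
    · omega
    · simp [hbit hj] at hb
  · simp only [not_or, not_and, Bool.not_eq_true] at h
    exact iff_of_true rfl ⟨by omega, h.2⟩

variable {a b E n v w : ℕ} {d : ℤ}

lemma extVec_syncX1 {j : ℤ} (hj : j < n) :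
    extVec (fun i : Fin n => syncX1 a b v i) j = syncX1 a b v j :=
  extVec_restrict (syncX1 a b v) (fun _ hj => if_pos (Or.inl (by omega))) hj

lemma syncOut_val_mod_two {i : ℕ} (hiE : i < E) (hin : i < n) :
    (syncOut a b E d n v w ⟨i, hin⟩ : ℕ) % 2 = (w.testBit i).toNat := by
  rw [syncOut, detOut, outEx_val_mod_two, parityX2, if_pos hiE]
  have := Bool.toNat_le (w.testBit i)
  simp only
  omega

lemma two_le_syncOut_iff {i : ℕ} (hiE : i < E) (hin : i < n) (hid : (i : ℤ) - d < n) :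
    2 ≤ (syncOut a b E d n v w ⟨i, hin⟩ : ℕ) ↔ syncX1 a b v (i - d) = X1ex.four := by
  rw [syncOut, detOut, two_le_outEx_iff, extVec_syncX1 hid]
  rw [parityX2, if_pos hiE]
  simp

lemma syncOut_val_of_le {k1 i : ℕ} (hd : d ∈ delaySet a b) (hE : k1 + 2 * a + 2 * b + 1 ≤ E)
    (hv : v < 2 ^ k1) (hEi : E ≤ i) (hin : i + a < n) :
    (syncOut a b E d n v w ⟨i, by omega⟩ : ℕ) = w / 2 ^ E / 4 ^ (i - E) % 4 := by
  rw [delaySet, mem_Icc] at hd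
  have hfour : syncX1 a b v (i - d) = X1ex.four :=
    syncX1_eq_four_iff.mpr ⟨by omega, fun _ => Nat.testBit_lt_two_pow
      (hv.trans_le (Nat.pow_le_pow_right two_pos (by omega)))⟩
  simp only [syncOut, detOut]
  rw [extVec_syncX1 (by omega), hfour, outEx_four, parityX2, if_neg (by omega)]
  rfl

lemma two_le_syncOut_iff_of_lt {i : ℕ} (hd : d ∈ delaySet a b) (hi : i < a + b + 1)
    (hiE : i < E) (hn : 2 * a + b + 1 ≤ n) :
    2 ≤ (syncOut a b E d n v w ⟨i, by omega⟩ : ℕ) ↔ (a : ℤ) + d ≤ i := by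
  rw [delaySet, mem_Icc] at hd
  rw [two_le_syncOut_iff hiE _ (by omega), syncX1_eq_four_iff]
  constructor
  · rintro ⟨h, -⟩
    omega
  · exact fun h => ⟨by omega, fun _ => by omega⟩

lemma two_le_syncOut_iff_testBit {i j : ℕ} (hij : (i : ℤ) - d = 2 * a + b + 1 + j)
    (hiE : i < E) (hin : i < n) (hjn : 2 * a + b + 1 + j < n) :
    2 ≤ (syncOut a b E d n v w ⟨i, hin⟩ : ℕ) ↔ v.testBit j = false := by
  rw [two_le_syncOut_iff hiE hin (by omega), syncX1_eq_four_iff, hij]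
  simp only [add_sub_cancel_left, Int.toNat_natCast]
  constructor
  · exact fun h => h.2 (by omega)
  · exact fun h => ⟨by omega, fun _ => h⟩

lemma delay_eq_of_syncOut_eq {d' : ℤ} {v' w' : ℕ} (hd : d ∈ delaySet a b) (hd' : d' ∈ delaySet a b)
    (hE : a + b + 1 ≤ E) (hn : 2 * a + b + 1 ≤ n)
    (h : syncOut a b E d n v w = syncOut a b E d' n v' w') : d = d' := by
  have key (i : ℕ) (hi : i < a + b + 1) : (a : ℤ) + d ≤ i ↔ (a : ℤ) + d' ≤ i := by
    rw [← two_le_syncOut_iff_of_lt (E := E) (v := v) (w := w) hd hi (by omega) hn, h,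
      two_le_syncOut_iff_of_lt hd' hi (by omega) hn]
  rw [delaySet, mem_Icc] at hd hd'
  have h1 := key (a + d).toNat (by omega)
  have h2 := key (a + d').toNat (by omega)
  omega

lemma fst_eq_of_syncOut_eq {k1 v' w' : ℕ} (hd : d ∈ delaySet a b) (hE : k1 + 2 * a + 2 * b + 1 ≤ E)
    (hn : E + a ≤ n) (hv : v < 2 ^ k1) (hv' : v' < 2 ^ k1)
    (h : syncOut a b E d n v w = syncOut a b E d n v' w') : v = v' := by
  rw [delaySet, mem_Icc] at hd
  refine Nat.eq_of_testBit_eq fun j => ?_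
  by_cases hj : j < k1
  · set i := ((2 * a + b + 1 + j : ℤ) + d).toNat
    have hij : (i : ℤ) - d = 2 * a + b + 1 + j := by omega
    have hiE : i < E := by omega
    have hin : i < n := by omega
    have hjn : 2 * a + b + 1 + j < n := by omega
    have h1 := two_le_syncOut_iff_testBit (v := v) (w := w) hij hiE hin hjn
    have h2 := two_le_syncOut_iff_testBit (v := v') (w := w') hij hiE hin hjn
    rw [h] at h1
    simpa using h1.symm.trans h2
  · have hk : 2 ^ k1 ≤ 2 ^ j := Nat.pow_le_pow_right two_pos (by omega)
    rw [Nat.testBit_lt_two_pow (hv.trans_le hk), Nat.testBit_lt_two_pow (hv'.trans_le hk)]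

lemma snd_eq_of_syncOut_eq {k1 k2 v' w' : ℕ} (hd : d ∈ delaySet a b)
    (hE : k1 + 2 * a + 2 * b + 1 ≤ E) (hn : E + k2 + a ≤ n) (hv : v < 2 ^ k1)
    (hv' : v' < 2 ^ k1) (hw : w < 2 ^ (E + 2 * k2)) (hw' : w' < 2 ^ (E + 2 * k2))
    (h : syncOut a b E d n v w = syncOut a b E d n v' w') : w = w' := by
  have hq_lt {u : ℕ} (hu : u < 2 ^ (E + 2 * k2)) : u / 2 ^ E < 4 ^ k2 :=
    Nat.div_lt_of_lt_mul (hu.trans_eq (by rw [pow_add, pow_mul]; norm_num))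
  have hq : w / 2 ^ E = w' / 2 ^ E :=
    eq_of_div_pow_mod_eq (hq_lt hw) (hq_lt hw') fun j hj => by
      have hin : E + j + a < n := by omega
      have h1 := syncOut_val_of_le (w := w) hd hE hv (Nat.le_add_right E j) hin
      have h2 := syncOut_val_of_le (w := w') hd hE hv' (Nat.le_add_right E j) hin
      rw [h] at h1
      simpa using h1.symm.trans h2
  refine Nat.eq_of_testBit_eq fun j => ?_
  by_cases hj : j < E
  · have hjn : j < n := by omega
    have h1 := syncOut_val_mod_two (a := a) (b := b) (d := d) (v := v) (w := w) hj hjn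
    have h2 := syncOut_val_mod_two (a := a) (b := b) (d := d) (v := v') (w := w') hj hjn
    rw [h] at h1
    revert h1 h2
    cases w.testBit j <;> cases w'.testBit j <;> simp_all
  · rw [← Nat.sub_add_cancel (not_lt.mp hj), ← Nat.testBit_div_two_pow, ← Nat.testBit_div_two_pow,
      hq]

end SyncCode

theorem accmacAchievable_Wex {dmin dmax : ℕ} {R : ℝ × ℝ} (h1 : 0 ≤ R.1) (h2 : 0 ≤ R.2)
    (hR1 : R.1 < 1) (hs : R.1 + R.2 < 2) : ACCMACAchievable Wex dmin dmax R := by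
  -- user 2 sends at least `k1` parity bits and `k2 ≥ n (R.2 - R.1) / 2` base-`4` digits
  have hy : R.1 + max 0 ((R.2 - R.1) / 2) < 1 := by
    rcases max_cases 0 ((R.2 - R.1) / 2) with ⟨h, -⟩ | ⟨h, -⟩ <;> rw [h] <;> linarith
  obtain ⟨n, k1, k2, hn, hk1, hk2, hlen⟩ := exists_nat_mul_le_of_add_lt_one h1
    (le_max_left _ _) hy (3 * dmin + 2 * dmax + 1)
  set E := k1 + 2 * dmin + 2 * dmax + 1
  have hk2' : n * ((R.2 - R.1) / 2) ≤ k2 :=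
    (mul_le_mul_of_nonneg_left (le_max_right _ _) n.cast_nonneg).trans hk2
  rw [Wex_eq_detChannel]
  refine ACCMACAchievable.of_injective h1 h2 hn (two_rpow_le_natCast_two_pow hk1)
    (two_rpow_le_natCast_two_pow (k := E + 2 * k2) (by push_cast [E]; linarith))
    (fun m1 i => syncX1 dmin dmax m1 i) (fun _ m2 i => parityX2 E m2 i)
    fun d hd d' hd' m m' h => ?_
  change syncOut dmin dmax E d n m.1 m.2 = syncOut dmin dmax E d' n m'.1 m'.2 at h
  obtain rfl := delay_eq_of_syncOut_eq hd hd' (by omega) (by omega) h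
  exact Prod.ext (Fin.ext (fst_eq_of_syncOut_eq hd le_rfl (by omega) m.1.2 m'.1.2 h))
    (Fin.ext (snd_eq_of_syncOut_eq hd le_rfl (by omega) m.1.2 m'.1.2 m.2.2 m'.2.2 h))

theorem acmacCapacity_Wex (dmin dmax : ℕ) :
    ACMACCapacity Wex dmin dmax = {R : ℝ × ℝ | 0 ≤ R.1 ∧ 0 ≤ R.2 ∧ R.1 + R.2 ≤ 2} := by
  refine closure_eq_of_smul_mem ?_ (fun R h => ⟨h.1, h.2.1, h.add_le_two_of_Wex⟩) ?_
  · exact (isClosed_le continuous_const continuous_fst).inter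
      ((isClosed_le continuous_const continuous_snd).inter
        (isClosed_le (continuous_fst.add continuous_snd) continuous_const))
  · rintro R ⟨h1, h2, hs⟩ t ⟨ht0, ht1⟩
    exact acmacAchievable_Wex (R := t • R) (mul_nonneg ht0.le h1) (mul_nonneg ht0.le h2)
      (show t * R.1 + t * R.2 < 2 by nlinarith)

theorem accmacCapacity_Wex (dmin dmax : ℕ) :
    ACCMACCapacity Wex dmin dmax
      = {R : ℝ × ℝ | 0 ≤ R.1 ∧ 0 ≤ R.2 ∧ R.1 ≤ 1 ∧ R.1 + R.2 ≤ 2} := by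
  refine closure_eq_of_smul_mem ?_ (fun R h => ⟨h.1, h.2.1, h.fst_le_one_of_Wex,
    h.acmacAchievable.add_le_two_of_Wex⟩) ?_
  · exact (isClosed_le continuous_const continuous_fst).inter
      ((isClosed_le continuous_const continuous_snd).inter
        ((isClosed_le continuous_fst continuous_const).inter
          (isClosed_le (continuous_fst.add continuous_snd) continuous_const)))
  · rintro R ⟨h1, h2, hR1, hs⟩ t ⟨ht0, ht1⟩
    exact accmacAchievable_Wex (R := t • R) (mul_nonneg ht0.le h1) (mul_nonneg ht0.le h2)
      (show t * R.1 < 1 by nlinarith) (show t * R.1 + t * R.2 < 2 by nlinarith)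

/-- **Example (codeword vs. message side-information).** For the channel
`Y = X2 mod X1` with `X1 = {2,4}`, `X2 = Y = {0,1,2,3}`, and every finite
bounded delay set, the capacity region of the ACC-MAC is the trapezoid
`{R1 ≤ 1, R1+R2 ≤ 2}` and is *strictly* contained in the capacity region of
the ACMAC, which is the triangle `{R1+R2 ≤ 2}` (rates in bits, `R1,R2 ≥ 0`):
codeword side-information can be strictly weaker than message
side-information. -/
theorem example_accmac_strictly_smaller (dmin dmax : ℕ) :
    ACCMACCapacity Wex dmin dmax
        = {R : ℝ × ℝ | 0 ≤ R.1 ∧ 0 ≤ R.2 ∧ R.1 ≤ 1 ∧ R.1 + R.2 ≤ 2} ∧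
    ACMACCapacity Wex dmin dmax
        = {R : ℝ × ℝ | 0 ≤ R.1 ∧ 0 ≤ R.2 ∧ R.1 + R.2 ≤ 2} ∧
    ACCMACCapacity Wex dmin dmax ⊂ ACMACCapacity Wex dmin dmax := by
  rw [accmacCapacity_Wex, acmacCapacity_Wex]
  refine ⟨rfl, rfl, fun R ⟨h1, h2, _, hs⟩ => ⟨h1, h2, hs⟩, fun hsub => ?_⟩
  have h20 := hsub (show ((2 : ℝ), (0 : ℝ)) ∈ {R : ℝ × ℝ | 0 ≤ R.1 ∧ 0 ≤ R.2 ∧ R.1 + R.2 ≤ 2}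
    by norm_num)
  norm_num at h20

end ACMACPaper
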